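/- Let G' be the Type A Whitney flip of a simple graph G along (H, v1, v2). Then G' is bipartite if and only if G is bipartite. -/

import Mathlib

open SimpleGraph

/-- The Type A Whitney flip of `G` along `(H, v1, v2)`: edges with both endpoints in `H`
are mapped by the swap of `v1` and `v2`; all other edges are kept. -/
def typeAFlip {V : Type*} [DecidableEq V] (G : SimpleGraph V) (v1 v2 : V) (H : Set V) :
    SimpleGraph V where
  Adj a b :=
    (Equiv.swap v1 v2 a ∈ H ∧ Equiv.swap v1 v2 b ∈ H ∧
      G.Adj (Equiv.swap v1 v2 a) (Equiv.swap v1 v2 b)) ∨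
    (¬(a ∈ H ∧ b ∈ H) ∧ G.Adj a b)
  symm := by
    constructor
    rintro a b (⟨ha, hb, h⟩ | ⟨hn, h⟩)
    · exact Or.inl ⟨hb, ha, h.symm⟩
    · exact Or.inr ⟨fun ⟨hb', ha'⟩ => hn ⟨ha', hb'⟩, h.symm⟩
  loopless := by
    constructor
    rintro a (⟨_, _, h⟩ | ⟨_, h⟩) <;> exact G.irrefl h

/-!
The flip is an involution and preserves the hypotheses on `(H, v1, v2)`, so it suffices to
2-colour the flip from a 2-colouring `c` of `G`. Inside `H` use `c ∘ swap` with the two colours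
exchanged, outside `H` keep `c`. The only edges leaving `H` start at `v = v1` or `v = v2`; since
`c (swap v) ≠ c v`, exchanging the colours gives back `c v` there, so these edges stay proper.
-/

lemma Fin.two_rev_eq_of_ne {a b : Fin 2} (h : a ≠ b) : a.rev = b := by
  revert a b
  decide

lemma Equiv.swap_apply_mem_iff {α : Type*} [DecidableEq α] {a b x : α} {s : Set α}
    (ha : a ∈ s) (hb : b ∈ s) : Equiv.swap a b x ∈ s ↔ x ∈ s := by
  rw [Equiv.swap_apply_def]
  split_ifs <;> simp_all

namespace SimpleGraph

variable {V : Type*} [DecidableEq V] {G : SimpleGraph V} {v1 v2 : V} {H : Set V}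

/-- The data along which a Type A Whitney flip is performed (without connectivity of `G[H]`). -/
structure IsFlipSet (G : SimpleGraph V) (v1 v2 : V) (H : Set V) : Prop where
  left_mem : v1 ∈ H
  right_mem : v2 ∈ H
  adj : G.Adj v1 v2
  mem_of_adj : ∀ x y : V, G.Adj x y → x ∈ H \ ({v1, v2} : Set V) → y ∈ H

lemma typeAFlip_typeAFlip (h1 : v1 ∈ H) (h2 : v2 ∈ H) :
    typeAFlip (typeAFlip G v1 v2 H) v1 v2 H = G := by
  have hmem (x : V) := Equiv.swap_apply_mem_iff (x := x) h1 h2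
  ext a b
  constructor
  · rintro (⟨ha, hb, ⟨-, -, h⟩ | ⟨hn, -⟩⟩ | ⟨hn, ⟨ha, hb, -⟩ | ⟨-, h⟩⟩)
    · simpa only [Equiv.swap_apply_self] using h
    · exact absurd ⟨ha, hb⟩ hn
    · exact absurd ⟨(hmem a).mp ha, (hmem b).mp hb⟩ hn
    · exact h
  · intro h
    by_cases hab : a ∈ H ∧ b ∈ H
    · refine Or.inl ⟨(hmem a).mpr hab.1, (hmem b).mpr hab.2, Or.inl ?_⟩
      simpa only [Equiv.swap_apply_self] using ⟨hab.1, hab.2, h⟩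
    · exact Or.inr ⟨hab, Or.inr ⟨hab, h⟩⟩

lemma IsFlipSet.isFlipSet_typeAFlip (hH : IsFlipSet G v1 v2 H) :
    IsFlipSet (typeAFlip G v1 v2 H) v1 v2 H where
  left_mem := hH.left_mem
  right_mem := hH.right_mem
  adj := Or.inl <| by
    simpa only [Equiv.swap_apply_left, Equiv.swap_apply_right] using
      ⟨hH.right_mem, hH.left_mem, hH.adj.symm⟩
  mem_of_adj := by
    rintro x y (⟨-, hy, -⟩ | ⟨-, h⟩) hx
    · exact (Equiv.swap_apply_mem_iff hH.left_mem hH.right_mem).mp hy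
    · exact hH.mem_of_adj x y h hx

lemma IsFlipSet.colorable_typeAFlip (hH : IsFlipSet G v1 v2 H) (hG : G.Colorable 2) :
    (typeAFlip G v1 v2 H).Colorable 2 := by
  classical
  obtain ⟨c⟩ := hG
  have hmem (x : V) := Equiv.swap_apply_mem_iff (x := x) hH.left_mem hH.right_mem
  let f (x : V) : Fin 2 := if x ∈ H then (c (Equiv.swap v1 v2 x)).rev else c x
  have f_of_mem_of_adj {x y : V} (h : G.Adj x y) (hx : x ∈ H) (hy : y ∉ H) : f x = c x := by
    have hx12 : x = v1 ∨ x = v2 := by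
      by_contra! hx12
      exact hy (hH.mem_of_adj x y h ⟨hx, by simp [hx12.1, hx12.2]⟩)
    have hswap : G.Adj (Equiv.swap v1 v2 x) x := by
      rcases hx12 with rfl | rfl
      · simpa only [Equiv.swap_apply_left] using hH.adj.symm
      · simpa only [Equiv.swap_apply_right] using hH.adj
    simpa only [f, if_pos hx] using Fin.two_rev_eq_of_ne (c.valid hswap)
  have f_of_not_mem {x : V} (hx : x ∉ H) : f x = c x := if_neg hx
  refine ⟨Coloring.mk f ?_⟩
  rintro a b (⟨ha, hb, h⟩ | ⟨hab, h⟩)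
  · simpa only [f, if_pos ((hmem a).mp ha), if_pos ((hmem b).mp hb)] using
      Fin.rev_injective.ne (c.valid h)
  · by_cases ha : a ∈ H <;> by_cases hb : b ∈ H
    · exact absurd ⟨ha, hb⟩ hab
    · rw [f_of_mem_of_adj h ha hb, f_of_not_mem hb]
      exact c.valid h
    · rw [f_of_not_mem ha, f_of_mem_of_adj h.symm hb ha]
      exact c.valid h
    · rw [f_of_not_mem ha, f_of_not_mem hb]
      exact c.valid h

end SimpleGraph

theorem typeAFlip_bipartite_iff_general {V : Type*} [DecidableEq V] (G : SimpleGraph V)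
    (v1 v2 : V) (hadj : G.Adj v1 v2)
    (H : Set V) (h1 : v1 ∈ H) (h2 : v2 ∈ H)
    (hHedge : ∀ x y : V, G.Adj x y → x ∈ H \ ({v1, v2} : Set V) → y ∈ H) :
    (typeAFlip G v1 v2 H).Colorable 2 ↔ G.Colorable 2 := by
  have hH : IsFlipSet G v1 v2 H := ⟨h1, h2, hadj, hHedge⟩
  refine ⟨fun hflip => ?_, hH.colorable_typeAFlip⟩
  simpa only [typeAFlip_typeAFlip h1 h2] using hH.isFlipSet_typeAFlip.colorable_typeAFlip hflip

/-- the Type A Whitney flip of a simple graph is bipartite (2-colorable) if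
and only if the original graph is bipartite. -/
theorem typeAFlip_bipartite_iff {V : Type*} [DecidableEq V] (G : SimpleGraph V)
    (v1 v2 : V) (hne : v1 ≠ v2) (hadj : G.Adj v1 v2)
    (H : Set V) (h1 : v1 ∈ H) (h2 : v2 ∈ H) (hHconn : (G.induce H).Connected)
    (hHedge : ∀ x y : V, G.Adj x y → x ∈ H \ ({v1, v2} : Set V) → y ∈ H) :
    (typeAFlip G v1 v2 H).Colorable 2 ↔ G.Colorable 2 :=
  typeAFlip_bipartite_iff_general G v1 v2 hadj H h1 h2 hHedge
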